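/- Let H be a real Hilbert space, a, b > 0, μ > 0, and φ : H → ℝ a nonzero continuous linear functional. Define I(u) = (a/2)‖u‖² − (b/4)‖u‖⁴ − μ·φ(u) and I′(u) : v ↦ (a − b‖u‖²)·⟨u, v⟩ − μ·φ(v). Then there is no sequence (u_n) in H with I(u_n) → a²/(4b) and ‖I′(u_n)‖ → 0 in the dual norm; that is, I has no Palais–Smale sequence at the level c = a²/(4b). -/

import Mathlib

/-!
Write `s = ‖u‖²` and `J(u) = I'(u) u = (a - b s) s - μ φ(u)`, so that `I(u) - J(u) = (3b/4) s² - (a/2) s`,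
a quadratic in `s` whose only nonnegative solution of `(3b/4) s² - (a/2) s = a²/(4b)` is `s = a/b`.
Along a Palais–Smale sequence `‖u‖` stays bounded (the norm of `(a - b‖u‖²)⟨u, ·⟩` grows like `b‖u‖³`),
hence `J(uₙ) → 0`, so `‖uₙ‖² → a/b` and the coefficient `a - b‖uₙ‖²` tends to `0`. Then
`(a - b‖uₙ‖²)⟨uₙ, ·⟩` tends both to `0` and to `μ φ`, forcing `φ = 0`.
-/

open Filter Topology

lemma norm_smul_innerSL {H : Type*} [NormedAddCommGroup H] [InnerProductSpace ℝ H] (c : ℝ) (u : H) :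
    ‖c • innerSL ℝ u‖ = |c| * ‖u‖ := by
  rw [norm_smul, Real.norm_eq_abs, innerSL_apply_norm]

lemma le_max_of_abs_sub_mul_sq_mul_le {a b M x : ℝ} (hb : 0 < b) (hx : 0 ≤ x)
    (h : |a - b * x ^ 2| * x ≤ M) : x ≤ max 1 ((M + a) / b) := by
  rcases le_or_gt x 1 with hx1 | hx1
  · exact le_max_of_le_left hx1
  have hM : 0 ≤ M := (mul_nonneg (abs_nonneg _) hx).trans h
  have hcoef : b * x ^ 2 - a ≤ |a - b * x ^ 2| := by rw [abs_sub_comm]; exact le_abs_self _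
  have hsq : b * x ^ 2 ≤ M + a := by nlinarith [mul_le_mul_of_nonneg_right hcoef hx]
  refine le_max_of_le_right ((le_div_iff₀ hb).2 ?_)
  nlinarith [mul_le_mul_of_nonneg_left hx1.le hb.le]

lemma mul_abs_sub_div_le_abs_quadratic {a b s : ℝ} (ha : 0 < a) (hb : 0 < b) (hs : 0 ≤ s) :
    a / 4 * |s - a / b| ≤ |3 * b / 4 * s ^ 2 - a / 2 * s - a ^ 2 / (4 * b)| := by
  have hfactor : 3 * b / 4 * s ^ 2 - a / 2 * s - a ^ 2 / (4 * b)
      = 3 * b / 4 * (s + a / (3 * b)) * (s - a / b) := by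
    field_simp
    ring
  rw [hfactor, abs_mul, abs_of_pos (by positivity : 0 < 3 * b / 4 * (s + a / (3 * b)))]
  gcongr
  calc a / 4 = 3 * b / 4 * (0 + a / (3 * b)) := by field_simp; ring
    _ ≤ 3 * b / 4 * (s + a / (3 * b)) := by gcongr

lemma tendsto_of_tendsto_quadratic {ι : Type*} {l : Filter ι} {a b : ℝ} (ha : 0 < a) (hb : 0 < b)
    {s : ι → ℝ} (hs : ∀ i, 0 ≤ s i)
    (h : Tendsto (fun i => 3 * b / 4 * s i ^ 2 - a / 2 * s i) l (𝓝 (a ^ 2 / (4 * b)))) :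
    Tendsto s l (𝓝 (a / b)) := by
  rw [tendsto_iff_norm_sub_tendsto_zero] at h ⊢
  refine squeeze_zero' (Eventually.of_forall fun i => norm_nonneg _)
    (Eventually.of_forall fun i => ?_) (by simpa using h.const_mul (4 / a))
  rw [Real.norm_eq_abs, div_mul_eq_mul_div, le_div_iff₀ ha]
  linarith [mul_abs_sub_div_le_abs_quadratic ha hb (hs i)]

theorem stmt_3_general {H : Type*} [NormedAddCommGroup H] [InnerProductSpace ℝ H]
    (a b μ : ℝ) (ha : 0 < a) (hb : 0 < b) (hμ : 0 < μ)
    (φ : H →L[ℝ] ℝ) (hφ : φ ≠ 0) :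
    ¬ ∃ u : ℕ → H,
        Tendsto (fun n => a / 2 * ‖u n‖ ^ 2 - b / 4 * ‖u n‖ ^ 4 - μ * φ (u n)) atTop
          (𝓝 (a ^ 2 / (4 * b))) ∧
        Tendsto (fun n => ‖(a - b * ‖u n‖ ^ 2) • innerSL ℝ (u n) - μ • φ‖) atTop (𝓝 0) := by
  rintro ⟨u, hI, hI'⟩
  set T : ℕ → H →L[ℝ] ℝ := fun n => (a - b * ‖u n‖ ^ 2) • innerSL ℝ (u n)
  have hT : Tendsto T atTop (𝓝 (μ • φ)) := tendsto_iff_norm_sub_tendsto_zero.2 hI'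
  have hbdd : IsBoundedUnder (· ≤ ·) atTop (fun n => ‖u n‖) := by
    obtain ⟨M, hM⟩ := hT.norm.isBoundedUnder_le
    exact isBoundedUnder_of_eventually_le (eventually_map.1 hM |>.mono fun n hn =>
      le_max_of_abs_sub_mul_sq_mul_le hb (norm_nonneg _) ((norm_smul_innerSL _ _).symm.trans_le hn))
  have hJ : Tendsto (fun n => (T n - μ • φ) (u n)) atTop (𝓝 0) :=
    (tendsto_sub_nhds_zero_iff.2 hT).op_zero_isBoundedUnder_le hbdd
      (fun (S : H →L[ℝ] ℝ) (v : H) => S v) fun S v => S.le_opNorm v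
  have hs : Tendsto (fun n => ‖u n‖ ^ 2) atTop (𝓝 (a / b)) := by
    refine tendsto_of_tendsto_quadratic ha hb (fun n => sq_nonneg _) ?_
    convert hI.sub hJ using 2 with n
    · simp [T]
      ring
    · rw [sub_zero]
  have hcoef : Tendsto (fun n => a - b * ‖u n‖ ^ 2) atTop (𝓝 0) := by
    convert (hs.const_mul b).const_sub a using 2
    field_simp
    ring
  have hT0 : Tendsto T atTop (𝓝 0) :=
    hcoef.zero_smul_isBoundedUnder_le (by simpa [Function.comp_def, innerSL_apply_norm] using hbdd)
  have hμφ : μ • φ = 0 := tendsto_nhds_unique hT hT0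
  exact hφ ((smul_eq_zero.1 hμφ).resolve_left hμ.ne')

theorem stmt_3 {H : Type*} [NormedAddCommGroup H] [InnerProductSpace ℝ H] [CompleteSpace H]
    (a b μ : ℝ) (ha : 0 < a) (hb : 0 < b) (hμ : 0 < μ)
    (φ : H →L[ℝ] ℝ) (hφ : φ ≠ 0) :
    ¬ ∃ u : ℕ → H,
        Tendsto (fun n => a / 2 * ‖u n‖ ^ 2 - b / 4 * ‖u n‖ ^ 4 - μ * φ (u n)) atTop
          (𝓝 (a ^ 2 / (4 * b))) ∧
        Tendsto (fun n => ‖(a - b * ‖u n‖ ^ 2) • innerSL ℝ (u n) - μ • φ‖) atTop (𝓝 0) :=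
  stmt_3_general a b μ ha hb hμ φ hφ
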